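/- In H(S_T), if α and β are both idempotents of the form θ_{x_1}^{-1}θ_{x_1} ⋯ θ_{x_n}^{-1}θ_{x_n} (lying in O↑ − O) and α D β (i.e., there exists γ ∈ H(S_T) with γγ* = α and γ*γ = β), then α = β. -/

import Mathlib

def IsWord {A : Type} (T : A → A → Prop) (w : List A) : Prop := w ≠ [] ∧ w.Chain' T

def PMap (A : Type) := List A → Option (List A)

def pzero {A : Type} : PMap A := fun _ => none

def pcomp {A : Type} (f g : PMap A) : PMap A := fun x => (g x).bind f

open Classical in
noncomputable def pinv {A : Type} (f : PMap A) : PMap A := fun y =>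
  if h : ∃ x, f x = some y then some h.choose else none

open Classical in
noncomputable def theta {A : Type} (T : A → A → Prop) (w : List A) : PMap A := fun x =>
  if IsWord T x ∧ IsWord T (w ++ x) then some (w ++ x) else none

open Classical in
noncomputable def pid {A : Type} (T : A → A → Prop) : PMap A := fun x =>
  if IsWord T x then some x else none

noncomputable def idemL {A : Type} (T : A → A → Prop) (a : A) : PMap A :=
  pcomp (pinv (theta T [a])) (theta T [a])

noncomputable def rgIdem {A : Type} (T : A → A → Prop) (a : A) : PMap A :=
  pcomp (theta T [a]) (pinv (theta T [a]))

noncomputable def prodIdems {A : Type} (T : A → A → Prop) (xs : List A) : PMap A :=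
  (xs.map (idemL T)).foldr pcomp (pid T)

def pdom {A : Type} (f : PMap A) : Set (List A) := {x | f x ≠ none}

inductive Hull {A : Type} (T : A → A → Prop) : PMap A → Prop
  | gen {w : List A} : IsWord T w → Hull T (theta T w)
  | zero : Hull T pzero
  | comp {f g : PMap A} : Hull T f → Hull T g → Hull T (pcomp f g)
  | inv {f : PMap A} : Hull T f → Hull T (pinv f)

open Classical in
noncomputable def smul {A : Type} (T : A → A → Prop) :
    Option (List A) → Option (List A) → Option (List A)
  | some u, some v => if IsWord T (u ++ v) then some (u ++ v) else none
  | _, _ => none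

/-!
Every element `γ` of the hull acts as `v ++ t ↦ u ++ t` for fixed words `u`, `v` and nonempty
words `t` (`RewritesPrefix`); this shape survives composition and inversion. A nonzero product of
the idempotents `θ_a⁻¹θ_a` fixes some one-letter word `[c]`. If `γγ*` and `γ*γ` are such products,
`γ` is defined on a one-letter word, forcing `v = []`, and reaches a one-letter word, forcing
`u = []`. So `γ` is a restriction of the identity, whence `γ* = γ` and `γγ* = γ*γ`.
-/

section
variable {A : Type} {T : A → A → Prop}

lemma pcomp_eq_some_iff {f g : PMap A} {x z : List A} :
    pcomp f g x = some z ↔ ∃ y, g x = some y ∧ f y = some z :=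
  Option.bind_eq_some_iff

lemma apply_eq_some_of_pinv_eq_some {f : PMap A} {x y : List A} (h : pinv f y = some x) :
    f x = some y := by
  unfold pinv at h
  split at h
  case isTrue h' => cases h; exact h'.choose_spec
  case isFalse => cases h

lemma pinv_ne_none_of_eq_some {f : PMap A} {x y : List A} (h : f x = some y) :
    pinv f y ≠ none := by
  simp [pinv, show ∃ x', f x' = some y from ⟨x, h⟩]

lemma pinv_eq_self_of_apply_eq_some {f : PMap A} (hf : ∀ x y, f x = some y → y = x) : pinv f = f := by
  funext y
  by_cases h : ∃ x, f x = some y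
  · obtain ⟨x, hx⟩ := id h
    obtain rfl := hf x y hx
    simp only [pinv, dif_pos h, hx, ← hf _ _ h.choose_spec]
  · cases hy : f y with
    | none => simp [pinv, h]
    | some z => exact absurd ⟨y, (hf y z hy) ▸ hy⟩ h

lemma theta_eq_some_iff {w x y : List A} :
    theta T w x = some y ↔ IsWord T x ∧ IsWord T (w ++ x) ∧ y = w ++ x := by
  unfold theta
  split_ifs with h
  · simp [h, eq_comm]
  · simp only [false_iff]
    tauto

open Classical in
lemma idemL_apply (a : A) (x : List A) :
    idemL T a x = if IsWord T x ∧ IsWord T (a :: x) then some x else none := by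
  split_ifs with h
  · have hx : theta T [a] x = some (a :: x) := theta_eq_some_iff.2 ⟨h.1, h.2, rfl⟩
    obtain ⟨z, hz⟩ := Option.ne_none_iff_exists'.1 (pinv_ne_none_of_eq_some hx)
    have hxz : x = z := by
      simpa using (theta_eq_some_iff.1 (apply_eq_some_of_pinv_eq_some hz)).2.2
    show (theta T [a] x).bind (pinv (theta T [a])) = some x
    rw [hx]
    exact hz.trans (congrArg some hxz.symm)
  · have hx : theta T [a] x = none := by
      simp only [theta, List.singleton_append]
      exact if_neg h
    show (theta T [a] x).bind (pinv (theta T [a])) = none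
    rw [hx]
    rfl

open Classical in
lemma prodIdems_apply (l x : List A) :
    prodIdems T l x = if IsWord T x ∧ ∀ a ∈ l, IsWord T (a :: x) then some x else none := by
  induction l with
  | nil => simp [prodIdems, pid]
  | cons a l ih =>
    change (prodIdems T l x).bind (fun y => idemL T a y) = _
    rw [ih]
    split_ifs <;> simp_all [idemL_apply]

lemma exists_prodIdems_singleton {l : List A} (hl : prodIdems T l ≠ pzero) :
    ∃ c : A, prodIdems T l [c] = some [c] := by
  obtain ⟨x, hx⟩ : ∃ x, prodIdems T l x ≠ none := by
    by_contra! h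
    exact hl (funext h)
  obtain ⟨⟨hne, -⟩, hl⟩ : IsWord T x ∧ ∀ a ∈ l, IsWord T (a :: x) := by
    by_contra h
    simp [prodIdems_apply, h] at hx
  obtain ⟨c, t, rfl⟩ := List.exists_cons_of_ne_nil hne
  refine ⟨c, by rw [prodIdems_apply, if_pos ⟨⟨by simp, .singleton c⟩, fun a ha => ⟨by simp, ?_⟩⟩]⟩
  show List.IsChain T [a, c]
  simpa using (hl a ha).2.take 2

def RewritesPrefix (T : A → A → Prop) (f : PMap A) (u v : List A) : Prop :=
  ∀ x y, f x = some y → ∃ t, IsWord T t ∧ x = v ++ t ∧ y = u ++ t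

namespace RewritesPrefix

lemma inv {f : PMap A} {u v : List A} (hf : RewritesPrefix T f u v) :
    RewritesPrefix T (_root_.pinv f) v u := fun y x h => by
  obtain ⟨t, ht, rfl, rfl⟩ := hf x y (apply_eq_some_of_pinv_eq_some h)
  exact ⟨t, ht, rfl, rfl⟩

/-- If `f ∘ g` is nonzero, the output prefix `u₂` of `g` and the input prefix `v₁` of `f` are
prefixes of one word, hence comparable; the longer one absorbs the difference. -/
lemma comp {f g : PMap A} {u₁ v₁ u₂ v₂ : List A}
    (hf : RewritesPrefix T f u₁ v₁) (hg : RewritesPrefix T g u₂ v₂) :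
    ∃ u v, RewritesPrefix T (_root_.pcomp f g) u v := by
  by_cases hne : ∃ x y, _root_.pcomp f g x = some y
  swap
  · exact ⟨[], [], fun x y h => absurd ⟨x, y, h⟩ hne⟩
  obtain ⟨x₀, y₀, hx₀⟩ := hne
  obtain ⟨m₀, hgx₀, hfm₀⟩ := pcomp_eq_some_iff.1 hx₀
  obtain ⟨s₀, -, -, hm₀⟩ := hg x₀ m₀ hgx₀
  obtain ⟨t₀, -, hm₀', -⟩ := hf m₀ y₀ hfm₀
  have hu₂ : u₂ <+: m₀ := hm₀ ▸ List.prefix_append u₂ s₀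
  have hv₁ : v₁ <+: m₀ := hm₀' ▸ List.prefix_append v₁ t₀
  rcases List.prefix_or_prefix_of_prefix hv₁ hu₂ with ⟨r, rfl⟩ | ⟨r, rfl⟩
  · refine ⟨u₁ ++ r, v₂, fun x y h => ?_⟩
    obtain ⟨m, hgx, hfm⟩ := pcomp_eq_some_iff.1 h
    obtain ⟨s, hs, rfl, rfl⟩ := hg x m hgx
    obtain ⟨t, -, hm, rfl⟩ := hf _ y hfm
    obtain rfl : r ++ s = t := by simpa using hm
    exact ⟨s, hs, rfl, by simp⟩
  · refine ⟨u₁, v₂ ++ r, fun x y h => ?_⟩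
    obtain ⟨m, hgx, hfm⟩ := pcomp_eq_some_iff.1 h
    obtain ⟨s, -, rfl, rfl⟩ := hg x m hgx
    obtain ⟨t, ht, hm, rfl⟩ := hf _ y hfm
    obtain rfl : s = r ++ t := by simpa using hm
    exact ⟨t, ht, by simp, rfl⟩

lemma eq_nil_of_apply_singleton {f : PMap A} {u v : List A} (hf : RewritesPrefix T f u v)
    {c : A} {y : List A} (h : f [c] = some y) : v = [] := by
  obtain ⟨t, ⟨ht, -⟩, hx, -⟩ := hf [c] y h
  exact ((List.singleton_eq_append_iff.1 hx).resolve_right fun h => ht h.2).1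

lemma eq_nil_of_apply_eq_singleton {f : PMap A} {u v : List A} (hf : RewritesPrefix T f u v)
    {c : A} {x : List A} (h : f x = some [c]) : u = [] := by
  obtain ⟨t, ⟨ht, -⟩, -, hy⟩ := hf x [c] h
  exact ((List.singleton_eq_append_iff.1 hy).resolve_right fun h => ht h.2).1

lemma eq_of_apply_eq_some {f : PMap A} (hf : RewritesPrefix T f [] []) {x y : List A}
    (h : f x = some y) : y = x := by
  obtain ⟨t, -, rfl, rfl⟩ := hf x y h
  rfl

end RewritesPrefix

lemma Hull.exists_rewritesPrefix {f : PMap A} (hf : Hull T f) : ∃ u v, RewritesPrefix T f u v := by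
  induction hf with
  | @gen w _ =>
    refine ⟨w, [], fun x y h => ?_⟩
    obtain ⟨hx, -, rfl⟩ := theta_eq_some_iff.1 h
    exact ⟨x, hx, rfl, rfl⟩
  | zero => exact ⟨[], [], fun x y h => by cases h⟩
  | comp _ _ ihf ihg =>
    obtain ⟨u₁, v₁, hf⟩ := ihf
    obtain ⟨u₂, v₂, hg⟩ := ihg
    exact hf.comp hg
  | inv _ ih =>
    obtain ⟨u, v, hf⟩ := ih
    exact ⟨v, u, hf.inv⟩

end

theorem stmt11_general {A : Type} (T : A → A → Prop)
    (xs ys : List A)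
    (hx : prodIdems T xs ≠ pzero) (hy : prodIdems T ys ≠ pzero)
    (hD : ∃ γ : PMap A, Hull T γ ∧ pcomp γ (pinv γ) = prodIdems T xs ∧
            pcomp (pinv γ) γ = prodIdems T ys) :
    prodIdems T xs = prodIdems T ys := by
  obtain ⟨γ, hγ, hα, hβ⟩ := hD
  obtain ⟨u, v, hu_v⟩ := hγ.exists_rewritesPrefix
  obtain ⟨c, hc⟩ := exists_prodIdems_singleton hy
  obtain ⟨m, hγc, -⟩ := pcomp_eq_some_iff.1 (hβ ▸ hc)
  obtain ⟨c', hc'⟩ := exists_prodIdems_singleton hx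
  obtain ⟨z, -, hγz⟩ := pcomp_eq_some_iff.1 (hα ▸ hc')
  obtain rfl := hu_v.eq_nil_of_apply_singleton hγc
  obtain rfl := hu_v.eq_nil_of_apply_eq_singleton hγz
  rw [← hα, ← hβ, pinv_eq_self_of_apply_eq_some fun _ _ => hu_v.eq_of_apply_eq_some]

/-- `D`-equivalent elements of `O↑ − O` are equal. -/
theorem stmt11 {A : Type} [Fintype A] (T : A → A → Prop) (hT : ∀ a : A, ∃ b : A, T a b)
    (xs ys : List A) (hxs : xs ≠ []) (hys : ys ≠ [])
    (hx : prodIdems T xs ≠ pzero) (hy : prodIdems T ys ≠ pzero)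
    (hD : ∃ γ : PMap A, Hull T γ ∧ pcomp γ (pinv γ) = prodIdems T xs ∧
            pcomp (pinv γ) γ = prodIdems T ys) :
    prodIdems T xs = prodIdems T ys :=
  stmt11_general T xs ys hx hy hD
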